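/- Let n be a positive integer, T > 0, let A : ℝ → Matrix (Fin n) (Fin n) ℝ be continuously differentiable on a neighborhood of 0 with derivative A'(0) at 0, let F : [0,T] → ℝⁿ be continuous, and let u₀ ∈ ℝⁿ. For each λ near 0 let u_λ : [0,T] → ℝⁿ be differentiable with u_λ'(t) = −A(λ) u_λ(t) + F(t) for all t ∈ [0,T] and u_λ(0) = u₀. Let v : [0,T] → ℝⁿ be differentiable with v'(t) = −A(0) v(t) − A'(0) (u_0(t)) and v(0) = 0. Then for every t ∈ [0,T], the map λ ↦ u_λ(t) is differentiable at λ = 0 with derivative v(t). -/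

import Mathlib

/-!
The error `w_c = u_c - u_0 - c • v` solves the linear equation
`w_c' = -A(c) w_c - (A(c) - A(0) - c A'(0)) u_0 - c (A(c) - A(0)) v` with `w_c(a) = 0`.
The forcing term is `o(c)` uniformly on the compact interval, since `u_0` and `v` are bounded
there and `A` is differentiable at `0`, while `‖A(c)‖` stays bounded; Grönwall's inequality
then gives `w_c(t) = o(c)`, which is the claimed derivative.
-/

open Set Filter Topology Asymptotics

theorem gronwallBound_zero_eq_mul (K ε x : ℝ) :
    gronwallBound 0 K ε x = ε * gronwallBound 0 K 1 x := by
  unfold gronwallBound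
  split_ifs <;> ring

section
variable {E : Type*} [NormedAddCommGroup E] [NormedSpace ℝ E]

theorem norm_linearization_error_le_gronwallBound {a b c K Mu Mv : ℝ} {B A₀ A'₀ : E →L[ℝ] E}
    {F uc u0 v : ℝ → E} (hua : uc a = u0 a)
    (huc : ∀ s ∈ Icc a b, HasDerivWithinAt uc (-B (uc s) + F s) (Icc a b) s)
    (hu0 : ∀ s ∈ Icc a b, HasDerivWithinAt u0 (-A₀ (u0 s) + F s) (Icc a b) s)
    (hva : v a = 0)
    (hv : ∀ s ∈ Icc a b, HasDerivWithinAt v (-A₀ (v s) - A'₀ (u0 s)) (Icc a b) s)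
    (hMu : ∀ s ∈ Icc a b, ‖u0 s‖ ≤ Mu) (hMv : ∀ s ∈ Icc a b, ‖v s‖ ≤ Mv) (hBK : ‖B‖ ≤ K) :
    ∀ t ∈ Icc a b, ‖uc t - u0 t - c • v t‖ ≤
      gronwallBound 0 K (‖B - A₀ - c • A'₀‖ * Mu + ‖c‖ * ‖B - A₀‖ * Mv) (t - a) := by
  have hw : ∀ s ∈ Icc a b, HasDerivWithinAt (fun s => uc s - u0 s - c • v s)
      (-B (uc s - u0 s - c • v s) - (B - A₀ - c • A'₀) (u0 s) - c • (B - A₀) (v s))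
      (Icc a b) s := fun s hs => by
    refine (((huc s hs).sub (hu0 s hs)).sub ((hv s hs).const_smul c)).congr_deriv ?_
    simp only [map_sub, map_smul, sub_apply, smul_apply]
    module
  refine norm_le_gronwallBound_of_norm_deriv_right_le
    (fun s hs => (hw s hs).continuousWithinAt)
    (fun s hs => (hw s (Ico_subset_Icc_self hs)).mono_of_mem_nhdsWithin
      (Icc_mem_nhdsGE_of_mem hs))
    (by simp [hua, hva]) fun s hs => ?_
  have hs' : s ∈ Icc a b := Ico_subset_Icc_self hs
  calc _ ≤ ‖B (uc s - u0 s - c • v s)‖ + ‖(B - A₀ - c • A'₀) (u0 s)‖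
          + ‖c • (B - A₀) (v s)‖ := by
        refine (norm_sub_le _ _).trans (add_le_add_left ((norm_sub_le _ _).trans ?_) _)
        rw [norm_neg]
    _ ≤ ‖B‖ * ‖uc s - u0 s - c • v s‖ + ‖B - A₀ - c • A'₀‖ * ‖u0 s‖
          + ‖c‖ * (‖B - A₀‖ * ‖v s‖) := by
        rw [norm_smul]
        gcongr <;> exact ContinuousLinearMap.le_opNorm _ _
    _ ≤ K * ‖uc s - u0 s - c • v s‖ + (‖B - A₀ - c • A'₀‖ * Mu + ‖c‖ * ‖B - A₀‖ * Mv) := by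
        have hwK : ‖B‖ * ‖uc s - u0 s - c • v s‖ ≤ K * ‖uc s - u0 s - c • v s‖ := by gcongr
        have huM : ‖B - A₀ - c • A'₀‖ * ‖u0 s‖ ≤ ‖B - A₀ - c • A'₀‖ * Mu := by
          gcongr; exact hMu s hs'
        have hvM : ‖c‖ * (‖B - A₀‖ * ‖v s‖) ≤ ‖c‖ * ‖B - A₀‖ * Mv := by
          rw [← mul_assoc]; gcongr; exact hMv s hs'
        linarith

theorem hasDerivAt_parametric_solution_of_linearized {a b : ℝ} {A : ℝ → E →L[ℝ] E}
    {A'₀ : E →L[ℝ] E} (hA : HasDerivAt A A'₀ 0) {F : ℝ → E} {u₀ : E} {u : ℝ → ℝ → E}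
    (hu : ∀ᶠ c in 𝓝 0, u c a = u₀ ∧ ∀ t ∈ Icc a b,
      HasDerivWithinAt (u c) (-A c (u c t) + F t) (Icc a b) t)
    {v : ℝ → E} (hva : v a = 0)
    (hv : ∀ t ∈ Icc a b, HasDerivWithinAt v (-A 0 (v t) - A'₀ (u 0 t)) (Icc a b) t) :
    ∀ t ∈ Icc a b, HasDerivAt (fun c => u c t) (v t) 0 := by
  intro t ht
  obtain ⟨hu0a, hu0⟩ := hu.self_of_nhds
  obtain ⟨Mu, hMu⟩ := isCompact_Icc.exists_bound_of_continuousOn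
    fun s hs => (hu0 s hs).continuousWithinAt
  obtain ⟨Mv, hMv⟩ := isCompact_Icc.exists_bound_of_continuousOn
    fun s hs => (hv s hs).continuousWithinAt
  have hK : ∀ᶠ c in 𝓝 0, ‖A c‖ ≤ ‖A 0‖ + 1 :=
    hA.continuousAt.norm.eventually (ge_mem_nhds (lt_add_one _))
  let δ : ℝ → ℝ := fun c => ‖A c - A 0 - c • A'₀‖ * Mu + ‖c‖ * ‖A c - A 0‖ * Mv
  have hδ : δ =o[𝓝 0] fun c => c := by
    have h₁ : (fun c => A c - A 0 - c • A'₀) =o[𝓝 0] fun c => c := by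
      simpa using hA.isLittleO
    have h₂ : (fun c => A c - A 0) =o[𝓝 0] fun _ => (1 : ℝ) :=
      (isLittleO_one_iff ℝ).2 (tendsto_sub_nhds_zero_iff.2 hA.continuousAt)
    have h₃ : (fun c => ‖c‖ * ‖A c - A 0‖) =o[𝓝 0] fun c => c := by
      simpa only [mul_one] using (isBigO_refl _ _).norm_left.mul_isLittleO h₂.norm_left
    simpa only [mul_one] using
      (h₁.norm_left.mul_isBigO (isBigO_const_const Mu one_ne_zero _)).add
        (h₃.mul_isBigO (isBigO_const_const Mv one_ne_zero _))
  rw [hasDerivAt_iff_isLittleO]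
  refine IsBigO.trans_isLittleO (IsBigO.of_bound (gronwallBound 0 (‖A 0‖ + 1) 1 (t - a)) ?_)
    (by simpa using hδ)
  filter_upwards [hu, hK] with c ⟨huca, huc⟩ hKc
  have hMu₀ : 0 ≤ Mu := (norm_nonneg _).trans (hMu t ht)
  have hMv₀ : 0 ≤ Mv := (norm_nonneg _).trans (hMv t ht)
  rw [sub_zero, Real.norm_of_nonneg (by positivity), mul_comm, ← gronwallBound_zero_eq_mul]
  exact norm_linearization_error_le_gronwallBound (huca.trans hu0a.symm) huc hu0 hva hv
    hMu hMv hKc t ht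
end

theorem hasDerivAt_toContinuousLinearMap_toLin' {𝕜 m n : Type*} [NontriviallyNormedField 𝕜]
    [CompleteSpace 𝕜] [Fintype m] [Fintype n] [DecidableEq m] [DecidableEq n]
    {A : 𝕜 → Matrix m n 𝕜} {A' : Matrix m n 𝕜} {x : 𝕜}
    (hA : ∀ i k, HasDerivAt (fun l => A l i k) (A' i k) x) :
    HasDerivAt (fun l => LinearMap.toContinuousLinearMap (Matrix.toLin' (A l)))
      (LinearMap.toContinuousLinearMap (Matrix.toLin' A')) x := by
  let Φ : Matrix m n 𝕜 →ₗ[𝕜] (n → 𝕜) →L[𝕜] (m → 𝕜) :=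
    LinearMap.toContinuousLinearMap.toLinearMap ∘ₗ Matrix.toLin'.toLinearMap
  have hΦ : ∀ M, Φ M = ∑ i, ∑ k, M i k • Φ (Matrix.single i k 1) := fun M => by
    conv_lhs => rw [Matrix.matrix_eq_sum_single M]
    simp only [map_sum, ← map_smul, Matrix.smul_single, smul_eq_mul, mul_one]
  change HasDerivAt (fun l => Φ (A l)) (Φ A') x
  rw [funext fun l => hΦ (A l), hΦ A']
  exact HasDerivAt.fun_sum fun i _ => HasDerivAt.fun_sum fun k _ =>
    (hA i k).smul_const (Φ (Matrix.single i k 1))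

theorem stmt3_general (n : ℕ) (T : ℝ)
    (A A' : ℝ → Matrix (Fin n) (Fin n) ℝ)
    (hA : ∀ᶠ lam in nhds (0 : ℝ), ∀ i k, HasDerivAt (fun l => A l i k) (A' lam i k) lam)
    (F : ℝ → Fin n → ℝ)
    (u₀ : Fin n → ℝ)
    (u : ℝ → ℝ → Fin n → ℝ)
    (hu : ∀ᶠ lam in nhds (0 : ℝ),
      u lam 0 = u₀ ∧ ∀ t ∈ Icc (0 : ℝ) T,
        HasDerivWithinAt (u lam) (-(A lam).mulVec (u lam t) + F t) (Icc (0 : ℝ) T) t)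
    (v : ℝ → Fin n → ℝ) (hv0 : v 0 = 0)
    (hv : ∀ t ∈ Icc (0 : ℝ) T,
      HasDerivWithinAt v (-(A 0).mulVec (v t) - (A' 0).mulVec (u 0 t)) (Icc (0 : ℝ) T) t) :
    ∀ t ∈ Icc (0 : ℝ) T, HasDerivAt (fun lam => u lam t) (v t) 0 :=
  hasDerivAt_parametric_solution_of_linearized
    (hasDerivAt_toContinuousLinearMap_toLin' hA.self_of_nhds) hu hv0 hv

/-- Gâteaux differentiability with respect to the parameter of the solution
of a linear parametric ODE `u_λ' = −A(λ) u_λ + F`, `u_λ(0) = u₀`: the derivative of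
`λ ↦ u_λ(t)` at `λ = 0` is the solution `v` of the linearized equation
`v' = −A(0) v − A'(0) u₀(·)`, `v(0) = 0`. -/
theorem stmt3 (n : ℕ) (hn : 0 < n) (T : ℝ) (hT : 0 < T)
    (A A' : ℝ → Matrix (Fin n) (Fin n) ℝ)
    (hA : ∀ᶠ lam in nhds (0 : ℝ), ∀ i k, HasDerivAt (fun l => A l i k) (A' lam i k) lam)
    (hA' : ∀ i k, ContinuousAt (fun lam => A' lam i k) 0)
    (F : ℝ → Fin n → ℝ) (hF : ContinuousOn F (Icc 0 T))
    (u₀ : Fin n → ℝ)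
    (u : ℝ → ℝ → Fin n → ℝ)
    (hu : ∀ᶠ lam in nhds (0 : ℝ),
      u lam 0 = u₀ ∧ ∀ t ∈ Icc (0 : ℝ) T,
        HasDerivWithinAt (u lam) (-(A lam).mulVec (u lam t) + F t) (Icc (0 : ℝ) T) t)
    (v : ℝ → Fin n → ℝ) (hv0 : v 0 = 0)
    (hv : ∀ t ∈ Icc (0 : ℝ) T,
      HasDerivWithinAt v (-(A 0).mulVec (v t) - (A' 0).mulVec (u 0 t)) (Icc (0 : ℝ) T) t) :
    ∀ t ∈ Icc (0 : ℝ) T, HasDerivAt (fun lam => u lam t) (v t) 0 :=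
  stmt3_general n T A A' hA F u₀ u hu v hv0 hv
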